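/- Let s > 1/2. There is a constant c > 0, depending only on s, such that for all m ∈ ℤ and all M ∈ ℕ: (a) Σ_{n∈ℤ} ⟨n⟩^{−s}⟨m−n⟩^{−s} ≤ c·⟨m⟩^{−(s−1/2)}; and (b) Σ_{n∈ℤ, |n|≥M} ⟨n⟩^{−s}⟨m−n⟩^{−s} ≤ c·⟨m⟩^{−(s−1/2)}·( 1_{{|m| ≥ 2M/3}} + ⟨M⟩^{−(s−1/2)} ). -/

import Mathlib

/-- The Japanese bracket `⟨n⟩ = (1+n²)^{1/2}` of an integer. -/
noncomputable def jap (n : ℤ) : ℝ := Real.sqrt (1 + (n : ℝ) ^ 2)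

lemma jap_pos (n : ℤ) : 0 < jap n := Real.sqrt_pos.2 (by positivity)

lemma one_le_jap (n : ℤ) : 1 ≤ jap n := by
  rw [show (1:ℝ) = Real.sqrt 1 by simp]
  exact Real.sqrt_le_sqrt (by nlinarith [sq_nonneg ((n:ℝ))])

lemma abs_le_jap (n : ℤ) : |(n : ℝ)| ≤ jap n := by
  rw [show |(n:ℝ)| = Real.sqrt ((n:ℝ)^2) by rw [Real.sqrt_sq_eq_abs]]
  exact Real.sqrt_le_sqrt (by nlinarith)

lemma jap_zero : jap 0 = 1 := by simp [jap]

lemma jap_neg (n : ℤ) : jap (-n) = jap n := by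
  unfold jap; push_cast; ring_nf

lemma jap_le_mul {c : ℝ} (hc : 1 ≤ c) {m n : ℤ} (h : |(m : ℝ)| ≤ c * |(n : ℝ)|) :
    jap m ≤ c * jap n := by
  have h2 : (m:ℝ)^2 ≤ c^2 * (n:ℝ)^2 := by
    have := abs_nonneg (m:ℝ)
    nlinarith [abs_nonneg (n:ℝ), sq_abs (m:ℝ), sq_abs (n:ℝ)]
  calc jap m ≤ Real.sqrt (c^2 * (1 + (n:ℝ)^2)) := Real.sqrt_le_sqrt (by nlinarith)
    _ = c * jap n := by
        rw [Real.sqrt_mul (by positivity), Real.sqrt_sq (by linarith)]; rfl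

lemma jap_le_jap {m n : ℤ} (h : |(m : ℝ)| ≤ |(n : ℝ)|) : jap m ≤ jap n := by
  have := jap_le_mul le_rfl (by linarith : |(m:ℝ)| ≤ 1 * |(n:ℝ)|)
  linarith

lemma abs_le_abs_of_jap_le {u v : ℤ} (h : jap u ≤ jap v) : |(u:ℝ)| ≤ |(v:ℝ)| := by
  have hu := Real.sq_sqrt (by positivity : (0:ℝ) ≤ 1 + (u:ℝ)^2)
  have hv := Real.sq_sqrt (by positivity : (0:ℝ) ≤ 1 + (v:ℝ)^2)
  have h2 : (u:ℝ)^2 ≤ (v:ℝ)^2 := by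
    have h0u := Real.sqrt_nonneg (1 + (u:ℝ)^2)
    have h0v := Real.sqrt_nonneg (1 + (v:ℝ)^2)
    unfold jap at h
    nlinarith
  calc |(u:ℝ)| = Real.sqrt ((u:ℝ)^2) := (Real.sqrt_sq_eq_abs _).symm
    _ ≤ Real.sqrt ((v:ℝ)^2) := Real.sqrt_le_sqrt h2
    _ = |(v:ℝ)| := Real.sqrt_sq_eq_abs _

lemma jap_le_sqrt2_mul_self {M : ℕ} (hM : 1 ≤ M) : jap (M:ℤ) ≤ Real.sqrt 2 * (M:ℝ) := by
  have h1 : jap (M:ℤ) ≤ Real.sqrt (2 * (M:ℝ)^2) := by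
    apply Real.sqrt_le_sqrt
    have : (1:ℝ) ≤ (M:ℝ) := by exact_mod_cast hM
    push_cast; nlinarith
  calc jap (M:ℤ) ≤ Real.sqrt (2 * (M:ℝ)^2) := h1
    _ = Real.sqrt 2 * (M:ℝ) := by
        rw [Real.sqrt_mul (by norm_num), Real.sqrt_sq (by positivity)]

lemma rpow_tail_step {p : ℝ} (hp : 1 < p) {x : ℝ} (hx : 1 ≤ x) :
    x ^ (-p) ≤ (2 ^ p / (p - 1)) * (x ^ (1 - p) - (x + 1) ^ (1 - p)) := by
  have hx0 : 0 < x := by linarith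
  have hlt : x < x + 1 := by linarith
  obtain ⟨ξ, hξ, hslope⟩ := exists_hasDerivAt_eq_slope (fun t => t ^ (1 - p))
      (fun t => (1 - p) * t ^ (-p)) hlt
      (by
        apply ContinuousOn.rpow_const continuousOn_id
        intro t ht
        exact Or.inl (by rw [id]; intro h; rw [h] at ht; exact absurd ht.1 (by linarith)))
      (by
        intro t ht
        have ht0 : t ≠ 0 := by intro h; rw [h] at ht; exact absurd ht.1 (by linarith)
        have := Real.hasDerivAt_rpow_const (p := 1 - p) (Or.inl ht0)
        have he : 1 - p - 1 = -p := by ring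
        rw [he] at this
        exact this)
  have hξ0 : 0 < ξ := lt_trans hx0 hξ.1
  have hsl : x ^ (1 - p) - (x + 1) ^ (1 - p) = (p - 1) * ξ ^ (-p) := by
    have h1 : (x + 1) - x = 1 := by ring
    rw [h1, div_one] at hslope
    nlinarith [hslope]
  have hξle : ξ ≤ 2 * x := le_trans hξ.2.le (by linarith)
  have hbound : (2 * x) ^ (-p) ≤ ξ ^ (-p) :=
    Real.rpow_le_rpow_of_nonpos hξ0 hξle (by linarith)
  have h2x : (2 * x) ^ (-p) = 2 ^ (-p) * x ^ (-p) :=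
    Real.mul_rpow (by norm_num) (by linarith)
  have hp1 : 0 < p - 1 := by linarith
  rw [hsl]
  have h2p : (0:ℝ) < 2 ^ p := Real.rpow_pos_of_pos (by norm_num) _
  have hneg : (2:ℝ) ^ (-p) = (2 ^ p)⁻¹ := by
    rw [Real.rpow_neg (by norm_num)]
  have key : (p - 1) * ((2 ^ p)⁻¹ * x ^ (-p)) ≤ (p - 1) * ξ ^ (-p) := by
    apply mul_le_mul_of_nonneg_left _ hp1.le
    rw [← hneg, ← h2x]; exact hbound
  have hxp : (0:ℝ) ≤ x ^ (-p) := Real.rpow_nonneg hx0.le _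
  calc x ^ (-p) = (2 ^ p / (p - 1)) * ((p - 1) * ((2 ^ p)⁻¹ * x ^ (-p))) := by
        field_simp
    _ ≤ (2 ^ p / (p - 1)) * ((p - 1) * ξ ^ (-p)) := by
        apply mul_le_mul_of_nonneg_left key (by positivity)

lemma summable_jap_nat {b : ℝ} (hb : 1 < b) : Summable (fun k : ℕ => jap (k:ℤ) ^ (-b)) := by
  rw [← summable_nat_add_iff 1]
  have hsum : Summable (fun k : ℕ => ((k:ℝ) + 1) ^ (-b)) := by
    have h0 : Summable (fun k : ℕ => ((k:ℝ)) ^ (-b)) :=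
      Real.summable_nat_rpow.mpr (by linarith)
    have := (summable_nat_add_iff 1).mpr h0
    apply this.congr
    intro k; push_cast; ring_nf
  apply Summable.of_nonneg_of_le (fun k => Real.rpow_nonneg (jap_pos _).le _) _ hsum
  intro k
  apply Real.rpow_le_rpow_of_nonpos (by positivity) _ (by linarith)
  have h1 := abs_le_jap ((k:ℤ) + 1)
  have h2 : |(((k:ℤ) + 1 : ℤ) : ℝ)| = (k:ℝ) + 1 := by
    push_cast
    exact abs_of_nonneg (by positivity)
  rw [h2] at h1
  exact_mod_cast h1

lemma summable_jap_int {b : ℝ} (hb : 1 < b) : Summable (fun n : ℤ => jap n ^ (-b)) := by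
  refine Summable.of_nat_of_neg (summable_jap_nat hb) ?_
  refine (summable_jap_nat hb).congr fun k => ?_
  rw [show (-(k:ℤ)) = -(k:ℤ) from rfl, jap_neg]

lemma nat_tail_bound {p : ℝ} (hp : 1 < p) (M : ℕ) (hM : 1 ≤ M) :
    ∃ A : ℝ, HasSum (fun k : ℕ => if M ≤ k then ((k:ℝ)) ^ (-p) else 0) A ∧
      A ≤ (2 ^ p / (p - 1)) * (M:ℝ) ^ (1 - p) := by
  set C : ℝ := 2 ^ p / (p - 1) with hC
  have hC0 : 0 < C := by
    apply div_pos (Real.rpow_pos_of_pos (by norm_num) _) (by linarith)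
  set G : ℕ → ℝ := fun k => if M ≤ k then ((k:ℝ)) ^ (-p) else 0 with hG
  set φ : ℕ → ℝ := fun k => ((k:ℝ)) ^ (1 - p) with hφ
  have hφ0 : ∀ k, 0 ≤ φ k := fun k => Real.rpow_nonneg (Nat.cast_nonneg k) _
  have hGnn : ∀ k, 0 ≤ G k := by
    intro k; simp only [hG]
    split
    · exact Real.rpow_nonneg (Nat.cast_nonneg k) _
    · exact le_rfl
  have hbound : ∀ N, ∑ k ∈ Finset.range N, G k ≤ C * φ M := by
    intro N
    have hsub : Finset.Ico M N ⊆ Finset.range N := by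
      intro k hk; rw [Finset.mem_range]; exact (Finset.mem_Ico.mp hk).2
    have hzero : ∀ k ∈ Finset.range N, k ∉ Finset.Ico M N → G k = 0 := by
      intro k hk hk2
      rw [Finset.mem_range] at hk
      have : ¬ M ≤ k := fun h => hk2 (Finset.mem_Ico.mpr ⟨h, hk⟩)
      simp only [hG, if_neg this]
    rw [← Finset.sum_subset hsub hzero]
    have step : ∀ k ∈ Finset.Ico M N, G k ≤ C * (φ k - φ (k+1)) := by
      intro k hk
      have hMk : M ≤ k := (Finset.mem_Ico.mp hk).1
      have hk1 : (1:ℝ) ≤ (k:ℝ) := by exact_mod_cast le_trans hM hMk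
      simp only [hG, if_pos hMk, hφ]
      have := rpow_tail_step hp hk1
      convert this using 4
      push_cast; ring
    calc ∑ k ∈ Finset.Ico M N, G k ≤ ∑ k ∈ Finset.Ico M N, C * (φ k - φ (k+1)) :=
          Finset.sum_le_sum step
      _ = C * ∑ k ∈ Finset.Ico M N, (φ k - φ (k+1)) := by rw [Finset.mul_sum]
      _ = C * (φ M - φ (M + (N - M))) := by
          rw [Finset.sum_Ico_eq_sum_range]
          have := Finset.sum_range_sub' (fun i => φ (M + i)) (N - M)
          simp only [add_zero] at this
          rw [← this]
          congr 1
      _ ≤ C * φ M := by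
          have := hφ0 (M + (N - M))
          nlinarith
  have hsummable : Summable G := summable_of_sum_range_le hGnn hbound
  refine ⟨∑' k, G k, hsummable.hasSum, ?_⟩
  exact Real.tsum_le_of_sum_range_le hGnn hbound

lemma int_tail_bound {p : ℝ} (hp : 1 < p) (M : ℕ) :
    ∑' n : ℤ, (if (M:ℤ) ≤ |n| then jap n ^ (-p) else 0)
      ≤ ((∑' n : ℤ, jap n ^ (-p)) + 2 * (2 ^ p / (p - 1)) * Real.sqrt 2 ^ (p - 1))
          * jap (M:ℤ) ^ (1 - p) := by
  have hK2 : Summable (fun n : ℤ => jap n ^ (-p)) := summable_jap_int hp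
  have hK2nn : (0:ℝ) ≤ ∑' n : ℤ, jap n ^ (-p) :=
    tsum_nonneg fun n => Real.rpow_nonneg (jap_pos n).le _
  have hC0 : (0:ℝ) < 2 ^ p / (p - 1) :=
    div_pos (Real.rpow_pos_of_pos (by norm_num) _) (by linarith)
  have hs2 : (0:ℝ) < Real.sqrt 2 ^ (p - 1) := Real.rpow_pos_of_pos (by positivity) _
  rcases Nat.eq_zero_or_pos M with hM | hM
  · subst hM
    have h1 : ∀ n : ℤ, ((0:ℕ):ℤ) ≤ |n| := fun n => by simp
    have heq : (∑' n : ℤ, (if ((0:ℕ):ℤ) ≤ |n| then jap n ^ (-p) else 0))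
        = ∑' n : ℤ, jap n ^ (-p) := by
      congr 1; funext n; rw [if_pos (h1 n)]
    rw [heq]
    have : jap ((0:ℕ):ℤ) ^ (1 - p) = 1 := by
      norm_cast; rw [jap_zero, Real.one_rpow]
    rw [this, mul_one]
    nlinarith
  · obtain ⟨A, hA, hAle⟩ := nat_tail_bound hp M hM
    set G : ℕ → ℝ := fun k => if M ≤ k then ((k:ℝ)) ^ (-p) else 0 with hGdef
    set F : ℤ → ℝ := fun n => G n.natAbs with hFdef
    have hG0 : G 0 = 0 := by
      simp only [hGdef, if_neg (by omega : ¬ M ≤ 0)]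
    have hGnn : ∀ k, 0 ≤ G k := by
      intro k; simp only [hGdef]; split
      · exact Real.rpow_nonneg (Nat.cast_nonneg k) _
      · exact le_rfl
    have h1 : HasSum (fun k : ℕ => F (k:ℤ)) A := by
      refine hA.congr_fun fun k => ?_
      simp only [hFdef, Int.natAbs_natCast]
    have hshift : HasSum (fun k : ℕ => G (k + 1)) A := by
      have hsumm : Summable (fun k : ℕ => G (k + 1)) :=
        (summable_nat_add_iff 1).mpr hA.summable
      have : ∑' k : ℕ, G k = G 0 + ∑' k : ℕ, G (k + 1) := Summable.tsum_eq_zero_add hA.summable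
      rw [hG0, zero_add, hA.tsum_eq] at this
      rw [this]
      exact hsumm.hasSum
    have h2 : HasSum (fun k : ℕ => F (-((k:ℤ) + 1))) A := by
      refine hshift.congr_fun fun k => ?_
      have : (-((k:ℤ) + 1)).natAbs = k + 1 := by omega
      simp only [hFdef, this]
    have hF : HasSum F (A + A) := HasSum.of_nat_of_neg_add_one h1 h2
    have hpt : ∀ n : ℤ, (if (M:ℤ) ≤ |n| then jap n ^ (-p) else 0) ≤ F n := by
      intro n
      by_cases h : (M:ℤ) ≤ |n|
      · have hna : M ≤ n.natAbs := by
          rw [Int.abs_eq_natAbs] at h; exact_mod_cast h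
        rw [if_pos h]
        simp only [hFdef, hGdef, if_pos hna]
        apply Real.rpow_le_rpow_of_nonpos
        · have : (1:ℝ) ≤ (n.natAbs : ℝ) := by exact_mod_cast by omega
          linarith
        · calc ((n.natAbs : ℝ)) = |(n:ℝ)| := by simp [Nat.cast_natAbs]
          _ ≤ jap n := abs_le_jap n
        · linarith
      · rw [if_neg h]; exact hGnn _
    have hle : ∑' n : ℤ, (if (M:ℤ) ≤ |n| then jap n ^ (-p) else 0) ≤ A + A := by
      rw [← hF.tsum_eq]
      refine Summable.tsum_le_tsum hpt ?_ hF.summable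
      apply Summable.of_nonneg_of_le _ hpt hF.summable
      intro n; split
      · exact Real.rpow_nonneg (jap_pos n).le _
      · exact le_rfl
    have hMbound : ((M:ℝ)) ^ (1 - p) ≤ Real.sqrt 2 ^ (p - 1) * jap (M:ℤ) ^ (1 - p) := by
      have hjap2 : jap (M:ℤ) / Real.sqrt 2 ≤ (M:ℝ) := by
        rw [div_le_iff₀ (by positivity)]
        calc jap (M:ℤ) ≤ Real.sqrt 2 * (M:ℝ) := jap_le_sqrt2_mul_self hM
          _ = (M:ℝ) * Real.sqrt 2 := by ring
      have hpos : 0 < jap (M:ℤ) / Real.sqrt 2 := div_pos (jap_pos _) (by positivity)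
      calc ((M:ℝ)) ^ (1 - p) ≤ (jap (M:ℤ) / Real.sqrt 2) ^ (1 - p) :=
            Real.rpow_le_rpow_of_nonpos hpos hjap2 (by linarith)
        _ = jap (M:ℤ) ^ (1 - p) / Real.sqrt 2 ^ (1 - p) :=
            Real.div_rpow (jap_pos _).le (Real.sqrt_nonneg 2) (1 - p)
        _ = Real.sqrt 2 ^ (p - 1) * jap (M:ℤ) ^ (1 - p) := by
            rw [show (1:ℝ) - p = -(p - 1) by ring, Real.rpow_neg (Real.sqrt_nonneg 2)]
            rw [div_eq_mul_inv, inv_inv]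
            ring
    have hjap1p : (0:ℝ) ≤ jap (M:ℤ) ^ (1 - p) := Real.rpow_nonneg (jap_pos _).le _
    calc ∑' n : ℤ, (if (M:ℤ) ≤ |n| then jap n ^ (-p) else 0) ≤ A + A := hle
      _ ≤ 2 * (2 ^ p / (p - 1)) * ((M:ℝ)) ^ (1 - p) := by nlinarith
      _ ≤ 2 * (2 ^ p / (p - 1)) * (Real.sqrt 2 ^ (p - 1) * jap (M:ℤ) ^ (1 - p)) := by
          apply mul_le_mul_of_nonneg_left hMbound (by positivity)
      _ ≤ ((∑' n : ℤ, jap n ^ (-p)) + 2 * (2 ^ p / (p - 1)) * Real.sqrt 2 ^ (p - 1))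
            * jap (M:ℤ) ^ (1 - p) := by nlinarith

-- pointwise key lemma for part (a)
lemma key_aux {s : ℝ} (hs : 1 / 2 < s) {m u v : ℤ} (huv : u + v = m) (h : jap u ≤ jap v) :
    jap u ^ (-s) * jap v ^ (-s)
      ≤ 2 ^ (s - 1/2) * jap m ^ (-(s - 1/2)) * jap u ^ (-(s + 1/2)) := by
  have habs : |(u:ℝ)| ≤ |(v:ℝ)| := abs_le_abs_of_jap_le h
  have hm2v : |(m:ℝ)| ≤ 2 * |(v:ℝ)| := by
    have : (m:ℝ) = (u:ℝ) + (v:ℝ) := by exact_mod_cast congrArg (Int.cast : ℤ → ℝ) huv.symm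
    rw [this]
    calc |(u:ℝ) + (v:ℝ)| ≤ |(u:ℝ)| + |(v:ℝ)| := abs_add_le _ _
      _ ≤ 2 * |(v:ℝ)| := by linarith
  have hjm : jap m ≤ 2 * jap v := jap_le_mul (by norm_num) hm2v
  have hv2 : jap m / 2 ≤ jap v := by linarith
  have hvpos : 0 < jap m / 2 := by have := jap_pos m; linarith
  have ha : (0:ℝ) ≤ s - 1/2 := by linarith
  -- jap v ^ (-s) ≤ 2^(s-1/2) * jap m ^(-(s-1/2)) * jap u ^ (-(1/2))
  have hsplit : jap v ^ (-s) = jap v ^ (-(s - 1/2)) * jap v ^ (-(1/2 : ℝ)) := by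
    rw [← Real.rpow_add (jap_pos v)]
    congr 1; ring
  have h1 : jap v ^ (-(s - 1/2)) ≤ (jap m / 2) ^ (-(s - 1/2)) :=
    Real.rpow_le_rpow_of_nonpos hvpos hv2 (by linarith)
  have h2 : jap v ^ (-(1/2 : ℝ)) ≤ jap u ^ (-(1/2 : ℝ)) :=
    Real.rpow_le_rpow_of_nonpos (jap_pos u) h (by norm_num)
  have hdm : (jap m / 2) ^ (-(s - 1/2)) = 2 ^ (s - 1/2) * jap m ^ (-(s - 1/2)) := by
    rw [Real.div_rpow (jap_pos m).le (by norm_num) (-(s - 1/2)),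
      show -(s - 1/2) = -(s - 1/2) from rfl]
    rw [Real.rpow_neg (by norm_num : (0:ℝ) ≤ 2), div_eq_mul_inv, inv_inv]
    ring
  have hvb : jap v ^ (-s) ≤ 2 ^ (s - 1/2) * jap m ^ (-(s - 1/2)) * jap u ^ (-(1/2 : ℝ)) := by
    rw [hsplit, ← hdm]
    apply mul_le_mul h1 h2 (Real.rpow_nonneg (jap_pos v).le _)
      (Real.rpow_nonneg hvpos.le _)
  calc jap u ^ (-s) * jap v ^ (-s)
      ≤ jap u ^ (-s) * (2 ^ (s - 1/2) * jap m ^ (-(s - 1/2)) * jap u ^ (-(1/2 : ℝ))) :=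
        mul_le_mul_of_nonneg_left hvb (Real.rpow_nonneg (jap_pos u).le _)
    _ = 2 ^ (s - 1/2) * jap m ^ (-(s - 1/2)) * (jap u ^ (-s) * jap u ^ (-(1/2 : ℝ))) := by
        ring
    _ = 2 ^ (s - 1/2) * jap m ^ (-(s - 1/2)) * jap u ^ (-(s + 1/2)) := by
        rw [← Real.rpow_add (jap_pos u)]
        congr 2
        ring

lemma key_pt {s : ℝ} (hs : 1 / 2 < s) (m n : ℤ) :
    jap n ^ (-s) * jap (m - n) ^ (-s)
      ≤ 2 ^ (s - 1/2) * jap m ^ (-(s - 1/2)) *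
          (jap n ^ (-(s + 1/2)) + jap (m - n) ^ (-(s + 1/2))) := by
  have hnn1 : (0:ℝ) ≤ jap n ^ (-(s + 1/2)) := Real.rpow_nonneg (jap_pos _).le _
  have hnn2 : (0:ℝ) ≤ jap (m - n) ^ (-(s + 1/2)) := Real.rpow_nonneg (jap_pos _).le _
  have hcpos : (0:ℝ) ≤ 2 ^ (s - 1/2) * jap m ^ (-(s - 1/2)) := by
    apply mul_nonneg (Real.rpow_nonneg (by norm_num) _) (Real.rpow_nonneg (jap_pos _).le _)
  rcases le_total (jap n) (jap (m - n)) with h | h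
  · have := key_aux hs (show n + (m - n) = m by ring) h
    nlinarith
  · have := key_aux hs (show (m - n) + n = m by ring) h
    rw [mul_comm (jap n ^ (-s))]
    nlinarith

/-- Convolution estimates with two equal exponents `s > 1/2`. -/
theorem statement6 (s : ℝ) (hs : 1 / 2 < s) :
    ∃ c > 0, ∀ (m : ℤ) (M : ℕ),
      (∑' n : ℤ, jap n ^ (-s) * jap (m - n) ^ (-s)
          ≤ c * jap m ^ (-(s - 1 / 2))) ∧
      (∑' n : ℤ, (if (M : ℤ) ≤ |n| then jap n ^ (-s) * jap (m - n) ^ (-s) else 0)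
          ≤ c * jap m ^ (-(s - 1 / 2)) *
            ((if 2 * (M : ℝ) / 3 ≤ |(m : ℝ)| then (1 : ℝ) else 0)
              + jap (M : ℤ) ^ (-(s - 1 / 2)))) := by
  have ha : (0:ℝ) ≤ s - 1/2 := by linarith
  have hq : 1 < s + 1/2 := by linarith
  have h2s : 1 < 2 * s := by linarith
  have hKsum : Summable (fun n : ℤ => jap n ^ (-(s + 1/2))) := summable_jap_int hq
  set K := ∑' n : ℤ, jap n ^ (-(s + 1/2)) with hKdef
  have hKnn : 0 ≤ K := tsum_nonneg fun n => Real.rpow_nonneg (jap_pos n).le _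
  set CT := (∑' n : ℤ, jap n ^ (-(2*s)))
      + 2 * (2 ^ (2*s) / (2*s - 1)) * Real.sqrt 2 ^ (2*s - 1) with hCTdef
  have hCTnn : 0 ≤ CT := by
    apply add_nonneg (tsum_nonneg fun n => Real.rpow_nonneg (jap_pos n).le _)
    have h1 : (0:ℝ) < 2 ^ (2*s) := Real.rpow_pos_of_pos (by norm_num) _
    have h2 : (0:ℝ) < Real.sqrt 2 ^ (2*s - 1) := Real.rpow_pos_of_pos (by positivity) _
    have h3 : (0:ℝ) < 2*s - 1 := by linarith
    positivity
  have h2a : (0:ℝ) ≤ 2 ^ (s - 1/2) := (Real.rpow_pos_of_pos (by norm_num) _).le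
  have h3s : (0:ℝ) ≤ 3 ^ s := (Real.rpow_pos_of_pos (by norm_num) _).le
  set c := 2 ^ (s - 1/2) * (2 * K) + 3 ^ s * CT + 1 with hcdef
  have hc0 : 0 < c := by
    have : 0 ≤ 2 ^ (s - 1/2) * (2 * K) := by positivity
    have : 0 ≤ 3 ^ s * CT := mul_nonneg h3s hCTnn
    rw [hcdef]; nlinarith [mul_nonneg h2a (by linarith : (0:ℝ) ≤ 2 * K)]
  refine ⟨c, hc0, fun m M => ?_⟩
  -- common setup for part (a)
  have hsummG : Summable (fun n : ℤ => jap (m - n) ^ (-(s + 1/2))) := by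
    have := ((Equiv.subLeft m).summable_iff
      (f := fun x : ℤ => jap x ^ (-(s + 1/2)))).mpr hKsum
    simpa [Function.comp_def, Equiv.subLeft] using this
  have htsumG : ∑' n : ℤ, jap (m - n) ^ (-(s + 1/2)) = K := by
    rw [hKdef]
    exact (Equiv.subLeft m).tsum_eq (fun x : ℤ => jap x ^ (-(s + 1/2)))
  have hterm_nonneg : ∀ n : ℤ, 0 ≤ jap n ^ (-s) * jap (m - n) ^ (-s) := fun n =>
    mul_nonneg (Real.rpow_nonneg (jap_pos _).le _) (Real.rpow_nonneg (jap_pos _).le _)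
  have hbig : Summable (fun n : ℤ => 2 ^ (s - 1/2) * jap m ^ (-(s - 1/2)) *
      (jap n ^ (-(s + 1/2)) + jap (m - n) ^ (-(s + 1/2)))) :=
    (hKsum.add hsummG).mul_left _
  have hterm_sum : Summable (fun n : ℤ => jap n ^ (-s) * jap (m - n) ^ (-s)) :=
    Summable.of_nonneg_of_le hterm_nonneg (fun n => key_pt hs m n) hbig
  have hX : (0:ℝ) ≤ jap m ^ (-(s - 1/2)) := Real.rpow_nonneg (jap_pos _).le _
  have parta : ∑' n : ℤ, jap n ^ (-s) * jap (m - n) ^ (-s)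
      ≤ c * jap m ^ (-(s - 1/2)) := by
    calc ∑' n : ℤ, jap n ^ (-s) * jap (m - n) ^ (-s)
        ≤ ∑' n : ℤ, 2 ^ (s - 1/2) * jap m ^ (-(s - 1/2)) *
            (jap n ^ (-(s + 1/2)) + jap (m - n) ^ (-(s + 1/2))) :=
          Summable.tsum_le_tsum (fun n => key_pt hs m n) hterm_sum hbig
      _ = 2 ^ (s - 1/2) * jap m ^ (-(s - 1/2)) * (K + K) := by
          rw [tsum_mul_left, Summable.tsum_add hKsum hsummG, htsumG]
      _ ≤ c * jap m ^ (-(s - 1/2)) := by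
          have h1 : 0 ≤ 3 ^ s * CT := mul_nonneg h3s hCTnn
          rw [hcdef]
          nlinarith [mul_nonneg (mul_nonneg h3s hCTnn) hX]
  refine ⟨parta, ?_⟩
  -- part (b)
  have hf_le_term : ∀ n : ℤ,
      (if (M:ℤ) ≤ |n| then jap n ^ (-s) * jap (m - n) ^ (-s) else 0)
        ≤ jap n ^ (-s) * jap (m - n) ^ (-s) := by
    intro n; split
    · exact le_rfl
    · exact hterm_nonneg n
  have hf_nonneg : ∀ n : ℤ,
      0 ≤ (if (M:ℤ) ≤ |n| then jap n ^ (-s) * jap (m - n) ^ (-s) else 0) := by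
    intro n; split
    · exact hterm_nonneg n
    · exact le_rfl
  have hf_sum : Summable (fun n : ℤ =>
      if (M:ℤ) ≤ |n| then jap n ^ (-s) * jap (m - n) ^ (-s) else 0) :=
    Summable.of_nonneg_of_le hf_nonneg hf_le_term hterm_sum
  by_cases hcase : 2 * (M:ℝ) / 3 ≤ |(m:ℝ)|
  · rw [if_pos hcase]
    have h1 : ∑' n : ℤ, (if (M:ℤ) ≤ |n| then jap n ^ (-s) * jap (m - n) ^ (-s) else 0)
        ≤ ∑' n : ℤ, jap n ^ (-s) * jap (m - n) ^ (-s) :=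
      Summable.tsum_le_tsum hf_le_term hf_sum hterm_sum
    have hjM : (0:ℝ) ≤ jap (M:ℤ) ^ (-(s - 1/2)) := Real.rpow_nonneg (jap_pos _).le _
    nlinarith [mul_nonneg (mul_nonneg hc0.le hX) hjM]
  · rw [if_neg hcase]
    have hm23 : |(m:ℝ)| < 2 * (M:ℝ) / 3 := not_le.mp hcase
    have hM1 : 1 ≤ M := by
      rcases Nat.eq_zero_or_pos M with h0 | h1
      · subst h0; simp at hm23; linarith [abs_nonneg (m:ℝ)]
      · exact h1
    -- pointwise bound
    have hpt : ∀ n : ℤ,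
        (if (M:ℤ) ≤ |n| then jap n ^ (-s) * jap (m - n) ^ (-s) else 0)
          ≤ 3 ^ s * (if (M:ℤ) ≤ |n| then jap n ^ (-(2*s)) else 0) := by
      intro n
      by_cases h : (M:ℤ) ≤ |n|
      · rw [if_pos h, if_pos h]
        have hMn : (M:ℝ) ≤ |(n:ℝ)| := by
          have : ((M:ℤ):ℝ) ≤ ((|n|:ℤ):ℝ) := by exact_mod_cast h
          rwa [Int.cast_abs] at this
        have habs : |(n:ℝ)| ≤ 3 * |((m - n : ℤ):ℝ)| := by
          push_cast
          have h1 : |(n:ℝ)| ≤ |(n:ℝ) - (m:ℝ)| + |(m:ℝ)| := by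
            calc |(n:ℝ)| = |((n:ℝ) - (m:ℝ)) + (m:ℝ)| := by ring_nf
              _ ≤ |(n:ℝ) - (m:ℝ)| + |(m:ℝ)| := abs_add_le _ _
          have h2 : |(n:ℝ) - (m:ℝ)| = |(m:ℝ) - (n:ℝ)| := abs_sub_comm _ _
          linarith
        have hj3 : jap n ≤ 3 * jap (m - n) := jap_le_mul (by norm_num) habs
        have hgap : jap n / 3 ≤ jap (m - n) := by linarith
        have hgpos : 0 < jap n / 3 := by have := jap_pos n; linarith
        have h2 : jap (m - n) ^ (-s) ≤ 3 ^ s * jap n ^ (-s) := by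
          calc jap (m - n) ^ (-s) ≤ (jap n / 3) ^ (-s) :=
                Real.rpow_le_rpow_of_nonpos hgpos hgap (by linarith)
            _ = 3 ^ s * jap n ^ (-s) := by
                rw [Real.div_rpow (jap_pos n).le (by norm_num) (-s),
                  Real.rpow_neg (by norm_num : (0:ℝ) ≤ 3), div_eq_mul_inv, inv_inv]
                ring
        calc jap n ^ (-s) * jap (m - n) ^ (-s)
            ≤ jap n ^ (-s) * (3 ^ s * jap n ^ (-s)) :=
              mul_le_mul_of_nonneg_left h2 (Real.rpow_nonneg (jap_pos _).le _)
          _ = 3 ^ s * (jap n ^ (-s) * jap n ^ (-s)) := by ring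
          _ = 3 ^ s * jap n ^ (-(2*s)) := by
              rw [← Real.rpow_add (jap_pos n)]
              congr 2
              ring
      · rw [if_neg h, if_neg h, mul_zero]
    have htail_sum : Summable (fun n : ℤ =>
        if (M:ℤ) ≤ |n| then jap n ^ (-(2*s)) else 0) := by
      apply Summable.of_nonneg_of_le _ _ (summable_jap_int h2s)
      · intro n; split
        · exact Real.rpow_nonneg (jap_pos n).le _
        · exact le_rfl
      · intro n; split
        · exact le_rfl
        · exact Real.rpow_nonneg (jap_pos n).le _
    have hb1 : ∑' n : ℤ, (if (M:ℤ) ≤ |n| then jap n ^ (-s) * jap (m - n) ^ (-s) else 0)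
        ≤ 3 ^ s * ∑' n : ℤ, (if (M:ℤ) ≤ |n| then jap n ^ (-(2*s)) else 0) := by
      calc ∑' n : ℤ, (if (M:ℤ) ≤ |n| then jap n ^ (-s) * jap (m - n) ^ (-s) else 0)
          ≤ ∑' n : ℤ, 3 ^ s * (if (M:ℤ) ≤ |n| then jap n ^ (-(2*s)) else 0) :=
            Summable.tsum_le_tsum hpt hf_sum (htail_sum.mul_left _)
        _ = 3 ^ s * ∑' n : ℤ, (if (M:ℤ) ≤ |n| then jap n ^ (-(2*s)) else 0) :=
            tsum_mul_left
    have hb2 := int_tail_bound h2s M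
    have hsplit2 : jap (M:ℤ) ^ (1 - 2*s)
        = jap (M:ℤ) ^ (-(s - 1/2)) * jap (M:ℤ) ^ (-(s - 1/2)) := by
      rw [← Real.rpow_add (jap_pos _)]
      congr 1
      ring
    have hmM : jap m ≤ jap (M:ℤ) := by
      apply jap_le_jap
      have : |((M:ℤ):ℝ)| = (M:ℝ) := by
        push_cast; exact abs_of_nonneg (Nat.cast_nonneg M)
      rw [this]
      have : 2 * (M:ℝ) / 3 ≤ (M:ℝ) := by
        have : (0:ℝ) ≤ (M:ℝ) := Nat.cast_nonneg M
        linarith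
      linarith
    have hanti : jap (M:ℤ) ^ (-(s - 1/2)) ≤ jap m ^ (-(s - 1/2)) :=
      Real.rpow_le_rpow_of_nonpos (jap_pos m) hmM (by linarith)
    have hY : (0:ℝ) ≤ jap (M:ℤ) ^ (-(s - 1/2)) := Real.rpow_nonneg (jap_pos _).le _
    rw [hsplit2] at hb2
    rw [← hCTdef] at hb2
    -- combine
    have hchain : ∑' n : ℤ,
        (if (M:ℤ) ≤ |n| then jap n ^ (-s) * jap (m - n) ^ (-s) else 0)
          ≤ 3 ^ s * (CT * (jap (M:ℤ) ^ (-(s - 1/2)) * jap (M:ℤ) ^ (-(s - 1/2)))) := by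
      calc ∑' n : ℤ, (if (M:ℤ) ≤ |n| then jap n ^ (-s) * jap (m - n) ^ (-s) else 0)
          ≤ 3 ^ s * ∑' n : ℤ, (if (M:ℤ) ≤ |n| then jap n ^ (-(2*s)) else 0) := hb1
        _ ≤ 3 ^ s * (CT * (jap (M:ℤ) ^ (-(s - 1/2)) * jap (M:ℤ) ^ (-(s - 1/2)))) :=
            mul_le_mul_of_nonneg_left hb2 h3s
    calc ∑' n : ℤ, (if (M:ℤ) ≤ |n| then jap n ^ (-s) * jap (m - n) ^ (-s) else 0)
        ≤ 3 ^ s * (CT * (jap (M:ℤ) ^ (-(s - 1/2)) * jap (M:ℤ) ^ (-(s - 1/2)))) := hchain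
      _ ≤ 3 ^ s * (CT * (jap m ^ (-(s - 1/2)) * jap (M:ℤ) ^ (-(s - 1/2)))) := by
          apply mul_le_mul_of_nonneg_left _ h3s
          apply mul_le_mul_of_nonneg_left _ hCTnn
          exact mul_le_mul_of_nonneg_right hanti hY
      _ ≤ c * jap m ^ (-(s - 1/2)) * (0 + jap (M:ℤ) ^ (-(s - 1/2))) := by
          rw [zero_add]
          have hxy : 0 ≤ jap m ^ (-(s - 1/2)) * jap (M:ℤ) ^ (-(s - 1/2)) :=
            mul_nonneg hX hY
          have hcoef : 3 ^ s * CT ≤ c := by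
            have h1 : (0:ℝ) ≤ 2 ^ (s - 1/2) * (2 * K) :=
              mul_nonneg h2a (by linarith)
            rw [hcdef]
            linarith
          calc 3 ^ s * (CT * (jap m ^ (-(s - 1/2)) * jap (M:ℤ) ^ (-(s - 1/2))))
              = (3 ^ s * CT) * (jap m ^ (-(s - 1/2)) * jap (M:ℤ) ^ (-(s - 1/2))) := by
                ring
            _ ≤ c * (jap m ^ (-(s - 1/2)) * jap (M:ℤ) ^ (-(s - 1/2))) :=
                mul_le_mul_of_nonneg_right hcoef hxy
            _ = c * jap m ^ (-(s - 1/2)) * jap (M:ℤ) ^ (-(s - 1/2)) := by ring
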